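/- Let T : Σ → Σ be a two-sided subshift of finite type with metric d_ω(x,y) = ω^k where k is the largest integer with x_i = y_i for all |i| < k (ω ∈ (0,1)). Let A : Σ → GL(k,ℝ) be r-Hölder and fiber bunched: ‖A(x)‖·‖A(x)⁻¹‖·ω^r < 1 for all x. Then for every x ∈ Σ and y in the local stable set of x, the limit H^s_{y←x} := lim_{n→∞} A^n(y)⁻¹·A^n(x) exists in GL(k,ℝ), and satisfies A(x)·H^s_{x←y} = H^s_{T(x)←T(y)}·A(y). -/

import Mathlib

/-!
Write `Hₙ(x, y) = (Aⁿ(x))⁻¹ Aⁿ(y)`. Peeling off the last factor of both products,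
`Hₙ₊₁ - Hₙ = (Aⁿ(x))⁻¹ A(Tⁿx)⁻¹ (A(Tⁿy) - A(Tⁿx)) Aⁿ(y)`. For `y` in the local stable set of `x`
the points `Tⁿx` and `Tⁿy` agree on `|i| < n`, so the middle factor is `O(ω^{rn})` by Hölder
continuity, while by compactness of the subshift fiber bunching holds uniformly,
`‖A‖ ‖A⁻¹‖ ω^r ≤ θ < 1`; this makes `‖Hₙ₊₁ - Hₙ‖ = O(θⁿ)`, so `Hₙ` is Cauchy.
Equivariance follows from `Hₙ₊₁(x, y) = A(x)⁻¹ Hₙ(Tx, Ty) A(y)`.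
-/

open Filter

/-- The left shift on the two-sided full shift. -/
def shiftMap {q : ℕ} (x : ℤ → Fin q) : ℤ → Fin q := fun i => x (i + 1)

/-- The matrix cocycle product `A^n(x) = A(T^{n-1}x)⋯A(Tx)A(x)` over the shift. -/
noncomputable def shiftCocycle {q k : ℕ}
    (A : (ℤ → Fin q) → (EuclideanSpace ℝ (Fin k) →L[ℝ] EuclideanSpace ℝ (Fin k))) :
    ℕ → (ℤ → Fin q) → (EuclideanSpace ℝ (Fin k) →L[ℝ] EuclideanSpace ℝ (Fin k))
  | 0, _ => 1
  | n + 1, x => shiftCocycle A n (shiftMap x) ∘L A x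

/-- The inverse cocycle `(A^n(x))⁻¹ = A(x)⁻¹ A(Tx)⁻¹ ⋯ A(T^{n-1}x)⁻¹`, built from a
pointwise inverse `B` of `A`. -/
noncomputable def shiftCocycleInv {q k : ℕ}
    (B : (ℤ → Fin q) → (EuclideanSpace ℝ (Fin k) →L[ℝ] EuclideanSpace ℝ (Fin k))) :
    ℕ → (ℤ → Fin q) → (EuclideanSpace ℝ (Fin k) →L[ℝ] EuclideanSpace ℝ (Fin k))
  | 0, _ => 1
  | n + 1, x => B x ∘L shiftCocycleInv B n (shiftMap x)

open Finset Topology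

variable {q k : ℕ}

lemma Real.prod_le_pow_mul_exp_of_le_add_geometric {u : ℕ → ℝ} {θ c s : ℝ} (hθ : 0 < θ)
    (hc : 0 ≤ c) (hs0 : 0 ≤ s) (hs1 : s < 1) (hu0 : ∀ j, 0 ≤ u j)
    (hu : ∀ j, u j ≤ θ + c * s ^ j) (n : ℕ) :
    ∏ j ∈ range n, u j ≤ θ ^ n * Real.exp (c / θ * (1 - s)⁻¹) := by
  have hfactor : ∀ j, θ + c * s ^ j = θ * (1 + c / θ * s ^ j) := fun j => by
    field_simp
  calc ∏ j ∈ range n, u j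
      ≤ ∏ j ∈ range n, (θ * (1 + c / θ * s ^ j)) :=
        prod_le_prod (fun j _ => hu0 j) fun j _ => (hu j).trans (hfactor j).le
    _ = θ ^ n * ∏ j ∈ range n, (1 + c / θ * s ^ j) := by
        rw [prod_mul_distrib, prod_const, card_range]
    _ ≤ θ ^ n * Real.exp (∑ j ∈ range n, c / θ * s ^ j) := by
        gcongr
        exact Real.prod_one_add_le_exp_sum _ fun j => by positivity
    _ ≤ θ ^ n * Real.exp (c / θ * (1 - s)⁻¹) := by
        rw [← mul_sum]
        gcongr θ ^ n * Real.exp (c / θ * ?_)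
        exact ((summable_geometric_of_lt_one hs0 hs1).sum_le_tsum _ fun j _ => by positivity
          ).trans_eq (tsum_geometric_of_lt_one hs0 hs1)

lemma IsCompact.exists_pos_lt_one_forall_le {X : Type*} [TopologicalSpace X] {S : Set X}
    (hS : IsCompact S) (hne : S.Nonempty) {f : X → ℝ} (hf : ContinuousOn f S)
    (hlt : ∀ x ∈ S, f x < 1) : ∃ θ, 0 < θ ∧ θ < 1 ∧ ∀ x ∈ S, f x ≤ θ := by
  obtain ⟨z, hz, hmax⟩ := hS.exists_isMaxOn hne hf
  obtain ⟨θ, hθ, hθ1⟩ := exists_between (max_lt (hlt z hz) zero_lt_one)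
  exact ⟨θ, (le_max_right _ _).trans_lt hθ, hθ1,
    fun x hx => (hmax hx).trans ((le_max_left _ _).trans hθ.le)⟩

lemma ContinuousOn.of_mul_eq_one {X R : Type*} [TopologicalSpace X] [NormedRing R]
    [HasSummableGeomSeries R] {S : Set X} {f g : X → R} (hf : ContinuousOn f S)
    (hfg : ∀ x ∈ S, f x * g x = 1 ∧ g x * f x = 1) : ContinuousOn g S := by
  let u (x : X) (hx : x ∈ S) : Rˣ := ⟨f x, g x, (hfg x hx).1, (hfg x hx).2⟩
  refine ContinuousOn.congr (f := fun x => Ring.inverse (f x)) (fun x hx => ?_)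
    fun x hx => (Ring.inverse_unit (u x hx)).symm
  exact (NormedRing.inverse_continuousAt (u x hx)).comp_continuousWithinAt (f := f) (hf x hx)

lemma isCompact_subshift (Q : Fin q → Fin q → Prop) :
    IsCompact {x : ℤ → Fin q | ∀ i : ℤ, Q (x i) (x (i + 1))} := by
  refine IsClosed.isCompact ?_
  simp only [Set.ofPred_forall]
  exact isClosed_iInter fun i => (isClosed_discrete {p : Fin q × Fin q | Q p.1 p.2}).preimage
    (f := fun x : ℤ → Fin q => (x i, x (i + 1))) (by fun_prop)

lemma eventually_nhds_forall_mem_Ioo_eq (z : ℤ → Fin q) (m : ℕ) :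
    ∀ᶠ w in 𝓝 z, ∀ i ∈ Ioo (-(m : ℤ)) m, w i = z i :=
  (Ioo _ _).eventually_all.2 fun i _ =>
    tendsto_pure.1 (by simpa only [nhds_discrete] using (continuous_apply i).tendsto z)

lemma continuousOn_of_dist_le_geometric {E : Type*} [PseudoMetricSpace E]
    {f : (ℤ → Fin q) → E} {S : Set (ℤ → Fin q)} {C s : ℝ} (hs0 : 0 ≤ s) (hs1 : s < 1)
    (hf : ∀ x ∈ S, ∀ y ∈ S, ∀ m : ℕ,
      (∀ i : ℤ, |i| < (m : ℤ) → x i = y i) → dist (f x) (f y) ≤ C * s ^ m) :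
    ContinuousOn f S := by
  intro z hz
  rw [Metric.continuousWithinAt_iff']
  intro ε hε
  have hsmall : Tendsto (fun m : ℕ => C * s ^ m) atTop (𝓝 0) := by
    simpa using (tendsto_pow_atTop_nhds_zero_of_lt_one hs0 hs1).const_mul C
  obtain ⟨m, hm⟩ := (hsmall.eventually (gt_mem_nhds hε)).exists
  filter_upwards [mem_nhdsWithin_of_mem_nhds (eventually_nhds_forall_mem_Ioo_eq z m),
    self_mem_nhdsWithin] with w hw hwS
  refine (hf w hwS z hz m fun i hi => hw i ?_).trans_lt hm
  exact mem_Ioo.2 (abs_lt.1 hi)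

lemma shiftMap_iterate_apply (x : ℤ → Fin q) (n : ℕ) (i : ℤ) :
    shiftMap^[n] x i = x (i + n) := by
  induction n generalizing x with
  | zero => simp
  | succ n ih =>
    rw [Function.iterate_succ_apply, ih, shiftMap]
    push_cast
    ring_nf

lemma shiftMap_iterate_apply_eq_of_abs_lt {x y : ℤ → Fin q}
    (hxy : ∀ n : ℤ, 0 ≤ n → y n = x n) (j : ℕ) :
    ∀ i : ℤ, |i| < (j : ℤ) → shiftMap^[j] y i = shiftMap^[j] x i := by
  intro i hi
  rw [shiftMap_iterate_apply, shiftMap_iterate_apply]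
  exact hxy _ (by rw [abs_lt] at hi; omega)

section Cocycle

variable (A B : (ℤ → Fin q) → (EuclideanSpace ℝ (Fin k) →L[ℝ] EuclideanSpace ℝ (Fin k)))

/-- The approximants `(Aⁿ(x))⁻¹ Aⁿ(y)` of the stable holonomy `H^s_{x←y}`. -/
noncomputable def holonomyApprox (n : ℕ) (x y : ℤ → Fin q) :
    EuclideanSpace ℝ (Fin k) →L[ℝ] EuclideanSpace ℝ (Fin k) :=
  shiftCocycleInv B n x * shiftCocycle A n y

lemma shiftCocycle_succ' (n : ℕ) (x : ℤ → Fin q) :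
    shiftCocycle A (n + 1) x = A (shiftMap^[n] x) * shiftCocycle A n x := by
  induction n generalizing x with
  | zero => exact (one_mul _).trans (mul_one _).symm
  | succ n ih =>
    change shiftCocycle A (n + 1) (shiftMap x) * A x = _
    rw [ih, mul_assoc]
    rfl

lemma shiftCocycleInv_succ' (n : ℕ) (x : ℤ → Fin q) :
    shiftCocycleInv B (n + 1) x = shiftCocycleInv B n x * B (shiftMap^[n] x) := by
  induction n generalizing x with
  | zero => exact (mul_one _).trans (one_mul _).symm
  | succ n ih =>
    change B x * shiftCocycleInv B (n + 1) (shiftMap x) = _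
    rw [ih, ← mul_assoc]
    rfl

lemma norm_shiftCocycle_le (n : ℕ) (x : ℤ → Fin q) :
    ‖shiftCocycle A n x‖ ≤ ∏ j ∈ range n, ‖A (shiftMap^[j] x)‖ := by
  induction n with
  | zero => exact ContinuousLinearMap.norm_id_le
  | succ n ih =>
    rw [shiftCocycle_succ', prod_range_succ, mul_comm (∏ j ∈ range n, _)]
    exact (norm_mul_le _ _).trans (by gcongr)

lemma norm_shiftCocycleInv_le (n : ℕ) (x : ℤ → Fin q) :
    ‖shiftCocycleInv B n x‖ ≤ ∏ j ∈ range n, ‖B (shiftMap^[j] x)‖ := by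
  induction n with
  | zero => exact ContinuousLinearMap.norm_id_le
  | succ n ih =>
    rw [shiftCocycleInv_succ', prod_range_succ]
    exact (norm_mul_le _ _).trans (by gcongr)

lemma holonomyApprox_succ (n : ℕ) (x y : ℤ → Fin q) :
    holonomyApprox A B (n + 1) x y = B x * holonomyApprox A B n (shiftMap x) (shiftMap y) * A y := by
  change B x * _ * (_ * A y) = _
  simp only [holonomyApprox, mul_assoc]

lemma dist_holonomyApprox_succ_le {n : ℕ} {x : ℤ → Fin q} (y : ℤ → Fin q)
    (hBA : B (shiftMap^[n] x) * A (shiftMap^[n] x) = 1) :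
    dist (holonomyApprox A B n x y) (holonomyApprox A B (n + 1) x y) ≤
      (∏ j ∈ range n, ‖B (shiftMap^[j] x)‖) * ‖B (shiftMap^[n] x)‖ *
        ‖A (shiftMap^[n] y) - A (shiftMap^[n] x)‖ * ∏ j ∈ range n, ‖A (shiftMap^[j] y)‖ := by
  set P := shiftCocycleInv B n x
  set Q := shiftCocycle A n y
  set b := B (shiftMap^[n] x)
  have hdiff : P * b * (A (shiftMap^[n] y) * Q) - P * Q =
      P * b * (A (shiftMap^[n] y) - A (shiftMap^[n] x)) * Q := by
    have hPQ : P * Q = P * b * A (shiftMap^[n] x) * Q := by rw [mul_assoc P b, hBA, mul_one]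
    rw [hPQ, mul_sub, sub_mul, ← mul_assoc (P * b)]
  rw [dist_eq_norm', holonomyApprox, holonomyApprox, shiftCocycleInv_succ', shiftCocycle_succ',
    hdiff]
  refine (norm_mul_le _ _).trans (mul_le_mul ?_ (norm_shiftCocycle_le A n y) (norm_nonneg _)
    (by positivity))
  exact norm_mul₃_le.trans (by gcongr; exact norm_shiftCocycleInv_le B n x)

lemma tendsto_holonomyApprox_of_tendsto_shiftMap {x y : ℤ → Fin q}
    {L : EuclideanSpace ℝ (Fin k) →L[ℝ] EuclideanSpace ℝ (Fin k)}
    (h : Tendsto (fun n => holonomyApprox A B n (shiftMap x) (shiftMap y)) atTop (𝓝 L)) :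
    Tendsto (fun n => holonomyApprox A B n x y) atTop (𝓝 (B x * L * A y)) := by
  refine (tendsto_add_atTop_iff_nat 1).1 ?_
  simpa only [holonomyApprox_succ] using (h.const_mul (B x)).mul_const (A y)

end Cocycle

theorem cauchySeq_holonomyApprox {S : Set (ℤ → Fin q)} (hS : IsCompact S)
    (hT : Set.MapsTo shiftMap S S)
    {A B : (ℤ → Fin q) → (EuclideanSpace ℝ (Fin k) →L[ℝ] EuclideanSpace ℝ (Fin k))}
    (hAB : ∀ x ∈ S, A x * B x = 1 ∧ B x * A x = 1) {C s : ℝ} (hC : 0 ≤ C) (hs0 : 0 ≤ s)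
    (hs1 : s < 1)
    (hHolder : ∀ x ∈ S, ∀ y ∈ S, ∀ m : ℕ,
      (∀ i : ℤ, |i| < (m : ℤ) → x i = y i) → ‖A x - A y‖ ≤ C * s ^ m)
    (hfb : ∀ x ∈ S, ‖A x‖ * ‖B x‖ * s < 1) {x y : ℤ → Fin q} (hx : x ∈ S) (hy : y ∈ S)
    (hxy : ∀ n : ℤ, 0 ≤ n → y n = x n) :
    CauchySeq fun n => holonomyApprox A B n x y := by
  have hAcont : ContinuousOn A S := continuousOn_of_dist_le_geometric hs0 hs1
    fun x hx y hy m h => (dist_eq_norm _ _).trans_le (hHolder x hx y hy m h)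
  have hBcont : ContinuousOn B S := hAcont.of_mul_eq_one hAB
  obtain ⟨θ, hθ0, hθ1, hθ⟩ := hS.exists_pos_lt_one_forall_le ⟨x, hx⟩
    ((hAcont.norm.mul hBcont.norm).mul continuousOn_const) hfb
  obtain ⟨CB, hCB⟩ := hS.exists_bound_of_continuousOn hBcont
  have hCB0 : 0 ≤ CB := (norm_nonneg _).trans (hCB x hx)
  have hdiff (j : ℕ) : ‖A (shiftMap^[j] y) - A (shiftMap^[j] x)‖ ≤ C * s ^ j :=
    hHolder _ (hT.iterate j hy) _ (hT.iterate j hx) j (shiftMap_iterate_apply_eq_of_abs_lt hxy j)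
  have hfactor (j : ℕ) :
      ‖B (shiftMap^[j] x)‖ * ‖A (shiftMap^[j] y)‖ * s ≤ θ + CB * C * s * s ^ j :=
    calc ‖B (shiftMap^[j] x)‖ * ‖A (shiftMap^[j] y)‖ * s
        ≤ ‖B (shiftMap^[j] x)‖ * (‖A (shiftMap^[j] x)‖ + C * s ^ j) * s := by
          gcongr
          exact (norm_le_norm_add_norm_sub' _ _).trans (by gcongr; exact hdiff j)
      _ = ‖A (shiftMap^[j] x)‖ * ‖B (shiftMap^[j] x)‖ * s
          + ‖B (shiftMap^[j] x)‖ * (C * s * s ^ j) := by ring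
      _ ≤ θ + CB * (C * s * s ^ j) := by
          gcongr
          exacts [hθ _ (hT.iterate j hx), hCB _ (hT.iterate j hx)]
      _ = θ + CB * C * s * s ^ j := by ring
  have hprod := Real.prod_le_pow_mul_exp_of_le_add_geometric hθ0 (by positivity) hs0 hs1
    (fun j => by positivity) hfactor
  refine cauchySeq_of_le_geometric θ (CB * C * Real.exp (CB * C * s / θ * (1 - s)⁻¹)) hθ1
    fun n => ?_
  calc _ ≤ _ := dist_holonomyApprox_succ_le A B y (hAB _ (hT.iterate n hx)).2
    _ ≤ (∏ j ∈ range n, ‖B (shiftMap^[j] x)‖) * CB * (C * s ^ n) *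
          ∏ j ∈ range n, ‖A (shiftMap^[j] y)‖ := by
        gcongr
        exacts [hCB _ (hT.iterate n hx), hdiff n]
    _ = CB * C * ∏ j ∈ range n, (‖B (shiftMap^[j] x)‖ * ‖A (shiftMap^[j] y)‖ * s) := by
        rw [prod_mul_distrib, prod_mul_distrib, prod_const, card_range]
        ring
    _ ≤ CB * C * (θ ^ n * Real.exp (CB * C * s / θ * (1 - s)⁻¹)) := by
        gcongr
        exact hprod n
    _ = _ := by ring

/-- Existence and equivariance of canonical stable holonomies for fiber bunched Hölder
cocycles over a two-sided subshift of finite type with the metric `d_ω`. -/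
theorem stable_holonomy_exists
    {q k : ℕ} (Q : Fin q → Fin q → Prop)
    (Sig : Set (ℤ → Fin q))
    (hSFT : Sig = {x | ∀ i : ℤ, Q (x i) (x (i + 1))})
    (A B : (ℤ → Fin q) → (EuclideanSpace ℝ (Fin k) →L[ℝ] EuclideanSpace ℝ (Fin k)))
    (hB : ∀ x ∈ Sig, A x ∘L B x = 1 ∧ B x ∘L A x = 1)
    (ω r Cst : ℝ) (hω0 : 0 < ω) (hω1 : ω < 1) (hr : 0 < r) (hC : 0 < Cst)
    -- `A` is `r`-Hölder with respect to `d_ω`: if `x` and `y` agree on `|i| < m`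
    -- then `d_ω(x,y) ≤ ω^m`
    (hHolder : ∀ x ∈ Sig, ∀ y ∈ Sig, ∀ m : ℕ,
      (∀ i : ℤ, |i| < (m : ℤ) → x i = y i) → ‖A x - A y‖ ≤ Cst * (ω ^ m) ^ r)
    -- fiber bunching
    (hfb : ∀ x ∈ Sig, ‖A x‖ * ‖B x‖ * ω ^ r < 1) :
    ∃ H : (ℤ → Fin q) → (ℤ → Fin q) →
        (EuclideanSpace ℝ (Fin k) →L[ℝ] EuclideanSpace ℝ (Fin k)),
      (∀ x ∈ Sig, ∀ y ∈ Sig, (∀ n : ℤ, 0 ≤ n → y n = x n) →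
        Tendsto (fun n : ℕ => shiftCocycleInv B n x ∘L shiftCocycle A n y)
          atTop (nhds (H x y))) ∧
      (∀ x ∈ Sig, ∀ y ∈ Sig, (∀ n : ℤ, 0 ≤ n → y n = x n) →
        A x ∘L H x y = H (shiftMap x) (shiftMap y) ∘L A y) := by
  have hS : IsCompact Sig := hSFT ▸ isCompact_subshift Q
  have hT : Set.MapsTo shiftMap Sig Sig := hSFT ▸ fun z hz i => hz (i + 1)
  have hHolder' : ∀ x ∈ Sig, ∀ y ∈ Sig, ∀ m : ℕ,
      (∀ i : ℤ, |i| < (m : ℤ) → x i = y i) → ‖A x - A y‖ ≤ Cst * (ω ^ r) ^ m := by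
    simpa only [← Real.rpow_pow_comm hω0.le] using hHolder
  have hlim : ∀ x ∈ Sig, ∀ y ∈ Sig, (∀ n : ℤ, 0 ≤ n → y n = x n) →
      Tendsto (fun n => holonomyApprox A B n x y) atTop
        (𝓝 (limUnder atTop fun n => holonomyApprox A B n x y)) := fun x hx y hy hxy =>
    (cauchySeq_holonomyApprox hS hT hB hC.le (Real.rpow_nonneg hω0.le r)
      (Real.rpow_lt_one hω0.le hω1 hr) hHolder' hfb hx hy hxy).tendsto_limUnder
  refine ⟨fun x y => limUnder atTop fun n => holonomyApprox A B n x y, hlim,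
    fun x hx y hy hxy => ?_⟩
  have hshift := tendsto_holonomyApprox_of_tendsto_shiftMap A B
    (hlim _ (hT hx) _ (hT hy) fun n hn => hxy (n + 1) (by omega))
  change A x * limUnder _ _ = _ * A y
  have hAB : A x * B x = 1 := (hB x hx).1
  rw [hshift.limUnder_eq, ← mul_assoc, ← mul_assoc, hAB, one_mul]
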